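/- arXiv:1201.3023 — 4 statements merged into one kernel-verified Lean document; each statement's English description precedes it below -/
import Mathlib

section
/- For every integer m ≥ 1, as t → 0⁺ one has ∫_{-a}^{a} e^{-x^{2m}/t} dx = (Γ(1/(2m))/m) · t^{1/(2m)} + o(t^{1/(2m)}), for any fixed a > 0; i.e., the limit of t^{-1/(2m)} ∫_{-a}^{a} e^{-x^{2m}/t} dx as t → 0⁺ equals Γ(1/(2m))/m. -/
open Real Filter Set MeasureTheory Topology

/-!
Substituting `x = t^{1/p} y` turns `t^{-1/p} ∫_{-a}^{a} e^{-|x|^p/t} dx` into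
`∫_{-a t^{-1/p}}^{a t^{-1/p}} e^{-|y|^p} dy`, whose limits of integration run off to `∓∞`;
since `e^{-|y|^p}` is integrable, the limit is `∫_ℝ e^{-|y|^p} dy = 2 Γ(1/p + 1)`, which for
`p = 2m` equals `Γ(1/(2m))/m`.
-/

theorem integral_exp_neg_abs_rpow {p : ℝ} (hp : 0 < p) :
    ∫ x : ℝ, exp (-|x| ^ p) = 2 * Gamma (1 / p + 1) := by
  rw [integral_comp_abs (f := fun x => exp (-x ^ p)), integral_exp_neg_rpow hp]

-- A non-integrable function has Bochner integral `0`.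
theorem integrable_exp_neg_abs_rpow {p : ℝ} (hp : 0 < p) :
    Integrable fun x : ℝ => exp (-|x| ^ p) :=
  Integrable.of_integral_ne_zero <| by rw [integral_exp_neg_abs_rpow hp]; positivity

theorem tendsto_smul_intervalIntegral_comp_mul_atTop {E : Type*} [NormedAddCommGroup E]
    [NormedSpace ℝ E] {f : ℝ → E} (hf : Integrable f) {a b : ℝ} (ha : a < 0) (hb : 0 < b) :
    Tendsto (fun s : ℝ => s • ∫ x in a..b, f (s * x)) atTop (𝓝 (∫ x, f x)) := by
  refine (intervalIntegral_tendsto_integral hf (tendsto_id.const_mul_atTop_of_neg ha)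
    (tendsto_id.const_mul_atTop hb)).congr' ?_
  filter_upwards [eventually_gt_atTop 0] with s hs
  rw [intervalIntegral.integral_comp_mul_left f hs.ne', smul_inv_smul₀ hs.ne', mul_comm s a,
    mul_comm s b]
  rfl

theorem tendsto_rpow_neg_inv_mul_intervalIntegral_exp_neg_abs_rpow_div {p a b : ℝ} (hp : 0 < p)
    (ha : a < 0) (hb : 0 < b) :
    Tendsto (fun t : ℝ => t ^ (-(1 / p)) * ∫ x in a..b, exp (-|x| ^ p / t)) (𝓝[>] 0)
      (𝓝 (2 * Gamma (1 / p + 1))) := by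
  rw [← integral_exp_neg_abs_rpow hp]
  refine ((tendsto_smul_intervalIntegral_comp_mul_atTop (integrable_exp_neg_abs_rpow hp) ha
    hb).comp (tendsto_rpow_neg_nhdsGT_zero (neg_lt_zero.2 (one_div_pos.2 hp)))).congr' ?_
  filter_upwards [self_mem_nhdsWithin] with t (ht : 0 < t)
  have hpow : (t ^ (-(1 / p))) ^ p = t⁻¹ := by
    rw [← rpow_mul ht.le, neg_mul, one_div_mul_cancel hp.ne', rpow_neg_one]
  simp only [Function.comp_apply, smul_eq_mul]
  congr 1
  refine intervalIntegral.integral_congr fun x _ => ?_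
  rw [abs_mul, abs_of_pos (rpow_pos_of_pos ht _), mul_rpow (rpow_nonneg ht.le _) (abs_nonneg x),
    hpow, inv_mul_eq_div, neg_div]

/-- One-dimensional Laplace asymptotics: for `m ≥ 1` and fixed `a > 0`,
`t^{-1/(2m)} ∫_{-a}^{a} e^{-x^{2m}/t} dx → Γ(1/(2m))/m` as `t → 0⁺`. -/
theorem laplace_asymptotic_one_dim (m : ℕ) (hm : 1 ≤ m) (a : ℝ) (ha : 0 < a) :
    Tendsto
      (fun t : ℝ => t ^ (-(1 / (2 * (m : ℝ)))) * ∫ x in (-a)..a, Real.exp (-(x ^ (2 * m)) / t))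
      (nhdsWithin 0 (Set.Ioi 0))
      (nhds (Real.Gamma (1 / (2 * (m : ℝ))) / m)) := by
  have hp : (0 : ℝ) < 2 * m := mul_pos two_pos (Nat.cast_pos.2 hm)
  have habs (x : ℝ) : |x| ^ (2 * (m : ℝ)) = x ^ (2 * m) := by
    rw [show (2 * (m : ℝ)) = ((2 * m : ℕ) : ℝ) by push_cast; ring, rpow_natCast,
      (even_two_mul m).pow_abs]
  have hGamma : 2 * Gamma (1 / (2 * (m : ℝ)) + 1) = Gamma (1 / (2 * (m : ℝ))) / m := by
    rw [Gamma_add_one (by positivity)]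
    field_simp
  simpa only [habs, hGamma] using
    tendsto_rpow_neg_inv_mul_intervalIntegral_exp_neg_abs_rpow_div hp (neg_lt_zero.2 ha) ha
end

section
/- Let f be a continuous function on [-a,a] (a > 0) and m ≥ 1 an integer. Then lim_{t→0⁺} t^{-1/(2m)} ∫_{-a}^{a} f(x) e^{-x^{2m}/t} dx = f(0) · Γ(1/(2m))/m. -/
open Real Filter Set MeasureTheory Topology

theorem exp_neg_abs_rpow_two_mul (m : ℕ) (x : ℝ) :
    exp (-|x| ^ (2 * m : ℝ)) = exp (-x ^ (2 * m)) := by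
  rw [← Nat.cast_ofNat, ← Nat.cast_mul, rpow_natCast, (even_two_mul m).pow_abs]

theorem integrable_exp_neg_pow_two_mul {m : ℕ} (hm : m ≠ 0) :
    Integrable fun x : ℝ => exp (-x ^ (2 * m)) := by
  simpa only [exp_neg_abs_rpow_two_mul] using
    integrable_exp_neg_abs_rpow (p := 2 * m) (by positivity)

theorem integral_exp_neg_pow_two_mul {m : ℕ} (hm : m ≠ 0) :
    ∫ x : ℝ, exp (-x ^ (2 * m)) = Gamma (1 / (2 * m)) / m := by
  have h2m : (2 * m : ℝ) ≠ 0 := by positivity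
  simp_rw [← exp_neg_abs_rpow_two_mul]
  rw [integral_exp_neg_abs_rpow (by positivity), Gamma_add_one (by positivity)]
  field_simp

theorem setIntegral_preimage_const_mul {E : Type*} [NormedAddCommGroup E] [NormedSpace ℝ E]
    {s : ℝ} (hs : 0 < s) (F : ℝ → E) {K : Set ℝ} (hK : MeasurableSet K) :
    ∫ y in (s * ·) ⁻¹' K, F (s * y) = s⁻¹ • ∫ x in K, F x := by
  rw [← integral_indicator (hK.preimage (measurable_const_mul s)), ← integral_indicator hK,
    ← abs_of_pos (inv_pos.2 hs), ← Measure.integral_comp_mul_left]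
  rfl

theorem tendsto_setIntegral_preimage_const_mul {f g : ℝ → ℝ} {K : Set ℝ} (hK : IsCompact K)
    (hK0 : K ∈ 𝓝 0) (hf : ContinuousOn f K) (hg : Integrable g) :
    Tendsto (fun s => ∫ y in (s * ·) ⁻¹' K, f (s * y) * g y) (𝓝 0) (𝓝 (f 0 * ∫ y, g y)) := by
  obtain ⟨C, hC⟩ := hK.exists_bound_of_continuousOn hf
  have hC0 : 0 ≤ C := (norm_nonneg _).trans (hC 0 (mem_of_mem_nhds hK0))
  have hKs (s : ℝ) : MeasurableSet ((s * ·) ⁻¹' K) :=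
    hK.isClosed.measurableSet.preimage (measurable_const_mul s)
  simp_rw [← integral_indicator (hKs _), ← integral_const_mul]
  refine tendsto_integral_filter_of_dominated_convergence (fun y => C * ‖g y‖)
    (.of_forall fun s => ?_) (.of_forall fun s => .of_forall fun y => ?_)
    (hg.norm.const_mul C) (.of_forall fun y => ?_)
  · have hfs : ContinuousOn (fun y => f (s * y)) ((s * ·) ⁻¹' K) :=
      hf.comp (continuous_const_mul s).continuousOn (mapsTo_preimage _ _)
    exact (aestronglyMeasurable_indicator_iff (hKs s)).2
      ((hfs.aestronglyMeasurable (hKs s)).mul hg.aestronglyMeasurable.restrict)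
  · rw [norm_indicator_eq_indicator_norm]
    refine indicator_le' (g := fun y => C * ‖g y‖) (fun y hy => ?_) (fun _ _ => by positivity) y
    rw [norm_mul]
    exact mul_le_mul_of_nonneg_right (hC _ hy) (norm_nonneg _)
  · have hsy : Tendsto (fun s : ℝ => s * y) (𝓝 0) (𝓝 0) := by
      simpa using (continuous_mul_const y).tendsto 0
    refine (((hf.continuousAt hK0).tendsto.comp hsy).mul_const (g y)).congr' ?_
    filter_upwards [hsy.eventually hK0] with s hs
    exact (indicator_of_mem (show y ∈ (s * ·) ⁻¹' K from hs) (fun y => f (s * y) * g y)).symm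

theorem rpow_neg_mul_setIntegral_exp_neg_pow_div {m : ℕ} (hm : m ≠ 0) {t : ℝ} (ht : 0 < t)
    (f : ℝ → ℝ) {K : Set ℝ} (hK : MeasurableSet K) :
    t ^ (-(1 / (2 * m : ℝ))) * ∫ x in K, f x * exp (-(x ^ (2 * m)) / t) =
      ∫ y in (t ^ (1 / (2 * m : ℝ)) * ·) ⁻¹' K,
        f (t ^ (1 / (2 * m : ℝ)) * y) * exp (-y ^ (2 * m)) := by
  set s := t ^ (1 / (2 * m : ℝ))
  have hs : 0 < s := rpow_pos_of_pos ht _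
  have hst : s ^ (2 * m) = t := by
    simpa [s, one_div] using rpow_inv_natCast_pow ht.le (n := 2 * m) (by omega)
  have hscale (y : ℝ) : exp (-y ^ (2 * m)) = exp (-(s * y) ^ (2 * m) / t) := by
    rw [mul_pow, hst, neg_div, mul_div_cancel_left₀ _ ht.ne']
  rw [rpow_neg ht.le, ← smul_eq_mul, ← setIntegral_preimage_const_mul hs _ hK]
  simp_rw [hscale]

/-- One-dimensional Laplace asymptotics with continuous amplitude: for continuous
`f` on `[-a,a]` and `m ≥ 1`,
`t^{-1/(2m)} ∫_{-a}^{a} f(x) e^{-x^{2m}/t} dx → f(0)·Γ(1/(2m))/m` as `t → 0⁺`. -/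
theorem laplace_asymptotic_one_dim_amplitude (m : ℕ) (hm : 1 ≤ m) (a : ℝ) (ha : 0 < a)
    (f : ℝ → ℝ) (hf : ContinuousOn f (Set.Icc (-a) a)) :
    Tendsto
      (fun t : ℝ =>
        t ^ (-(1 / (2 * (m : ℝ)))) * ∫ x in (-a)..a, f x * Real.exp (-(x ^ (2 * m)) / t))
      (nhdsWithin 0 (Set.Ioi 0))
      (nhds (f 0 * (Real.Gamma (1 / (2 * (m : ℝ))) / m))) := by
  have hm0 : m ≠ 0 := by omega
  have hp : 0 < 1 / (2 * m : ℝ) := by positivity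
  have hscale : Tendsto (fun t : ℝ => t ^ (1 / (2 * m : ℝ))) (𝓝[>] 0) (𝓝 0) := by
    have := (continuousAt_rpow_const 0 _ (.inr hp.le)).tendsto.mono_left
      (nhdsWithin_le_nhds (s := Ioi 0))
    rwa [zero_rpow hp.ne'] at this
  have hlim := (tendsto_setIntegral_preimage_const_mul isCompact_Icc
    (Icc_mem_nhds (neg_neg_of_pos ha) ha) hf (integrable_exp_neg_pow_two_mul hm0)).comp hscale
  rw [integral_exp_neg_pow_two_mul hm0] at hlim
  refine hlim.congr' (eventually_mem_nhdsWithin.mono fun t ht => ?_)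
  dsimp only [Function.comp_apply]
  rw [intervalIntegral.integral_of_le (by linarith), ← integral_Icc_eq_integral_Ioc,
    rpow_neg_mul_setIntegral_exp_neg_pow_div hm0 ht f measurableSet_Icc]
end

section
/- Define 𝓔 : ℝ × ℝ → ℝ² (Grushin exponential map from q₀ = (-1, -π/4)) for sin θ ≠ 0 by x(t,θ) = -sin(θ - t sin θ)/sin θ and y(t,θ) = -π/4 + (1/(4 sin θ))(2t - 2cos θ + sin(2θ - 2t sin θ)/sin θ). Then 𝓔(π, π/2) = (1, π/4) and ∂𝓔/∂θ (π, π/2) = (0, 0). -/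
/-! Along the geodesic with `θ = π/2` one has `sin θ = 1`, `cos θ = 0`, so `𝓔(t, π/2)` is
`(-cos t, -π/4 + (2t + sin 2t)/4)`, which equals `(1, π/4)` at `t = π`. With the phase
`φ = θ - t sin θ`, differentiating in `θ` and using `sin²θ + cos²θ = 1` shows that
`∂𝓔/∂θ = J · (1/sin²θ, -cos φ / sin³θ)` for a single scalar `J(t, θ)`, and `J(t, π/2) = -sin t`
vanishes at `t = π`. -/

open Real

/-- The Grushin exponential map from `q₀ = (-1,-π/4)`. -/
noncomputable def grushinExp (t θ : ℝ) : ℝ × ℝ :=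
  (-Real.sin (θ - t * Real.sin θ) / Real.sin θ,
   -π / 4 + (1 / (4 * Real.sin θ)) *
     (2 * t - 2 * Real.cos θ + Real.sin (2 * θ - 2 * t * Real.sin θ) / Real.sin θ))

noncomputable def grushinExpDerivFactor (t θ : ℝ) : ℝ :=
  sin (θ - t * sin θ) * cos θ - (1 - t * cos θ) * cos (θ - t * sin θ) * sin θ

theorem grushinExp_pi_div_two (t : ℝ) :
    grushinExp t (π / 2) = (-cos t, -π / 4 + (2 * t + sin (2 * t)) / 4) := by
  have h : 2 * (π / 2) - 2 * t = π - 2 * t := by ring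
  simp only [grushinExp, sin_pi_div_two, cos_pi_div_two, sin_pi_div_two_sub, h, sin_pi_sub,
    mul_one, mul_zero, sub_zero, div_one, one_div, Prod.mk.injEq, add_right_inj, true_and]
  ring

theorem grushinExpDerivFactor_pi_div_two (t : ℝ) :
    grushinExpDerivFactor t (π / 2) = -sin t := by
  simp [grushinExpDerivFactor, cos_pi_div_two_sub]

theorem hasDerivAt_grushinExp {t θ : ℝ} (hθ : sin θ ≠ 0) :
    HasDerivAt (grushinExp t)
      (grushinExpDerivFactor t θ / sin θ ^ 2,
        -cos (θ - t * sin θ) * grushinExpDerivFactor t θ / sin θ ^ 3) θ := by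
  have hφ : HasDerivAt (fun θ => θ - t * sin θ) (1 - t * cos θ) θ :=
    (hasDerivAt_id θ).sub ((hasDerivAt_sin θ).const_mul t)
  have h2φ : HasDerivAt (fun θ => 2 * θ - 2 * t * sin θ) (2 * (1 - t * cos θ)) θ := by
    simpa only [mul_sub, mul_assoc] using hφ.const_mul 2
  have hx := ((hasDerivAt_sin _).comp θ hφ).neg.div (hasDerivAt_sin θ) hθ
  have hy := (((hasDerivAt_const θ (1 : ℝ)).div ((hasDerivAt_sin θ).const_mul 4)
    (mul_ne_zero four_ne_zero hθ)).mul
    (((hasDerivAt_const θ (2 * t)).sub ((hasDerivAt_cos θ).const_mul 2)).add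
      (((hasDerivAt_sin _).comp θ h2φ).div (hasDerivAt_sin θ) hθ))).const_add (-π / 4)
  refine (hx.prodMk hy).congr_deriv ?_
  have hdouble : 2 * θ - 2 * t * sin θ = 2 * (θ - t * sin θ) := by ring
  simp only [Function.comp_apply, Pi.div_apply, Pi.sub_apply, Pi.add_apply,
    Pi.neg_apply, hdouble, sin_two_mul, cos_two_mul, grushinExpDerivFactor, Prod.mk.injEq]
  constructor
  · field_simp
    ring
  · field_simp
    linear_combination 2 * sin θ * sin_sq_add_cos_sq θ

/-- The point `q₁ = (1,π/4)` is a critical value of the time-`π` Grushin exponential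
map from `q₀ = (-1,-π/4)`: `𝓔(π,π/2) = (1,π/4)` and `∂𝓔/∂θ(π,π/2) = (0,0)`, so `q₁` is
conjugate to `q₀` along the geodesic with `θ = π/2`. -/
theorem grushin_conjugate_point :
    grushinExp π (π / 2) = (1, π / 4) ∧
      deriv (fun θ => grushinExp π θ) (π / 2) = ((0 : ℝ), (0 : ℝ)) := by
  constructor
  · rw [grushinExp_pi_div_two, cos_pi, two_mul, sin_add_pi, sin_pi]
    ext <;> simp only [neg_neg, neg_zero, add_zero]
    ring
  · rw [(hasDerivAt_grushinExp (by simp)).deriv, grushinExpDerivFactor_pi_div_two, sin_pi]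
    simp
end

section
/- Let g : ℝ² → ℝ be defined by g(u,v) = 8u² + (α/24)v⁴ + R(u,v) where α > 0 and R is a polynomial whose monomials all have total degree ≥ 5. Then lim_{t→0⁺} t^{-3/4} ∫_{[-δ,δ]²} e^{-g(u,v)/t} du dv = Γ(1/2)·Γ(1/4)·(8)^{-1/2}·(α/24)^{-1/4}/2 for sufficiently small δ > 0, i.e., the Laplace integral behaves like C·t^{1/2 + 1/4} = C·t^{3/4} with an explicit positive constant C. -/
/-!
After the anisotropic substitution `u = t^{1/2} x`, `v = t^{1/4} y`, which has Jacobian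
`t^{3/4}`, the phase becomes `g(u, v) / t = 8x² + (α/24)y⁴ + R(t^{1/2} x, t^{1/4} y) / t`.
Every monomial `uᵃ vᵇ` of `R` has weighted degree `a/2 + b/4 ≥ 5/4 > 1`, so `R = o(u² + v⁴)`
at the origin: the remainder term tends to `0` pointwise, and on a small enough box it is
absorbed by half of the principal part. Dominated convergence, with the integrable majorant
`exp(-4x² - (α/48)y⁴)`, then gives the product of a Gaussian and a quartic Gamma integral.
-/

open Real Filter Set MvPolynomial MeasureTheory Asymptotics Topology

lemma sqrt_sqrt_pow_four {t : ℝ} (ht : 0 ≤ t) : √√t ^ 4 = t := by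
  rw [show 4 = 2 * 2 from rfl, pow_mul, sq_sqrt (sqrt_nonneg _), sq_sqrt ht]

lemma rpow_neg_three_quarters_mul_sqrt_mul_sqrt_sqrt {t : ℝ} (ht : 0 < t) :
    t ^ (-(3 / 4 : ℝ)) * (√t * √√t) = 1 := by
  rw [sqrt_eq_rpow, sqrt_eq_rpow, ← rpow_mul ht.le, ← rpow_add ht, ← rpow_add ht]
  norm_num

section Remainder

variable {R : MvPolynomial (Fin 2) ℝ}

lemma abs_pow_mul_pow_le_pow_five {r u v : ℝ} {a b : ℕ} (hab : 5 ≤ 2 * a + b) (hr₀ : 0 ≤ r)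
    (hr₁ : r ≤ 1) (hu : |u| ≤ r ^ 2) (hv : |v| ≤ r) : |u ^ a * v ^ b| ≤ r ^ 5 :=
  calc |u ^ a * v ^ b| = |u| ^ a * |v| ^ b := by rw [abs_mul, abs_pow, abs_pow]
    _ ≤ (r ^ 2) ^ a * r ^ b := by gcongr
    _ = r ^ (2 * a + b) := by ring
    _ ≤ r ^ 5 := pow_le_pow_of_le_one hr₀ hr₁ hab

lemma abs_eval_le_of_weightedDegree (hR : ∀ d ∈ R.support, 5 ≤ 2 * d 0 + d 1) {r u v : ℝ}
    (hr₀ : 0 ≤ r) (hr₁ : r ≤ 1) (hu : |u| ≤ r ^ 2) (hv : |v| ≤ r) :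
    |eval ![u, v] R| ≤ (∑ d ∈ R.support, |coeff d R|) * r ^ 5 := by
  rw [eval_eq', Finset.sum_mul]
  refine (Finset.abs_sum_le_sum_abs _ _).trans (Finset.sum_le_sum fun d hd => ?_)
  rw [Fin.prod_univ_two, abs_mul]
  exact mul_le_mul_of_nonneg_left (abs_pow_mul_pow_le_pow_five (hR d hd) hr₀ hr₁ hu hv)
    (abs_nonneg _)

/-- With `r = (u² + v⁴)^{1/4}` every monomial `uᵃ vᵇ` with `2a + b ≥ 5` is `O(r⁵) = o(r⁴)`. -/
theorem isLittleO_eval_of_weightedDegree (hR : ∀ d ∈ R.support, 5 ≤ 2 * d 0 + d 1) :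
    (fun p : ℝ × ℝ => eval ![p.1, p.2] R) =o[𝓝 0] fun p => p.1 ^ 2 + p.2 ^ 4 := by
  set C := ∑ d ∈ R.support, |coeff d R|
  let r : ℝ × ℝ → ℝ := fun p => √√(p.1 ^ 2 + p.2 ^ 4)
  have hr : Tendsto r (𝓝 0) (𝓝 0) := by
    have : Continuous r := by fun_prop
    simpa [r] using this.tendsto 0
  refine isLittleO_iff.2 fun c hc => ?_
  filter_upwards [hr.eventually_le_const one_pos,
    (hr.const_mul C).eventually_le_const (by simpa using hc)] with p hr₁ hrc
  have hs : 0 ≤ p.1 ^ 2 + p.2 ^ 4 := by positivity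
  have hr₄ : r p ^ 4 = p.1 ^ 2 + p.2 ^ 4 := by
    rw [show 4 = 2 * 2 from rfl, pow_mul, sq_sqrt (sqrt_nonneg _), sq_sqrt hs]
  have hu : |p.1| ≤ r p ^ 2 := by
    rw [sq_sqrt (sqrt_nonneg _)]
    exact abs_le_sqrt (by nlinarith [pow_two_nonneg (p.2 ^ 2)])
  have hv : |p.2| ≤ r p := by
    refine abs_le_sqrt (le_sqrt_of_sq_le ?_)
    nlinarith [sq_nonneg p.1]
  calc ‖eval ![p.1, p.2] R‖ ≤ C * r p ^ 5 :=
        abs_eval_le_of_weightedDegree hR (sqrt_nonneg _) hr₁ hu hv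
    _ = C * r p * r p ^ 4 := by ring
    _ ≤ c * ‖p.1 ^ 2 + p.2 ^ 4‖ := by
        rw [hr₄, norm_of_nonneg hs]
        exact mul_le_mul_of_nonneg_right hrc hs

lemma tendsto_eval_sqrt_mul_div (hR : ∀ d ∈ R.support, 5 ≤ 2 * d 0 + d 1) (x y : ℝ) :
    Tendsto (fun t => eval ![√t * x, √√t * y] R / t) (𝓝[>] 0) (𝓝 0) := by
  have hσ : Tendsto (fun t : ℝ => (√t * x, √√t * y)) (𝓝[>] 0) (𝓝 0) :=
    ((by fun_prop : Continuous fun t : ℝ => (√t * x, √√t * y)).tendsto' 0 0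
      (by simp)).mono_left nhdsWithin_le_nhds
  have hscale : (fun t => (√t * x) ^ 2 + (√√t * y) ^ 4) =ᶠ[𝓝[>] 0]
      fun t => (x ^ 2 + y ^ 4) * t := by
    filter_upwards [self_mem_nhdsWithin] with t (ht : 0 < t)
    rw [mul_pow, mul_pow, sq_sqrt ht.le, sqrt_sqrt_pow_four ht.le]
    ring
  exact ((isLittleO_eval_of_weightedDegree hR).comp_tendsto hσ |>.trans_isBigO
    (hscale.trans_isBigO (isBigO_const_mul_self _ _ _))).tendsto_div_nhds_zero

end Remainder

lemma intervalIntegral_intervalIntegral_comp_mul_left (f : ℝ → ℝ → ℝ) {c₁ c₂ : ℝ}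
    (h₁ : c₁ ≠ 0) (h₂ : c₂ ≠ 0) (a b c d : ℝ) :
    ∫ u in a..b, ∫ v in c..d, f u v =
      c₁ * c₂ * ∫ x in a / c₁..b / c₁, ∫ y in c / c₂..d / c₂, f (c₁ * x) (c₂ * y) := by
  simp only [intervalIntegral.integral_comp_mul_left (f _) h₂,
    intervalIntegral.integral_comp_mul_left (fun u => ∫ v in c..d, f u v) h₁,
    intervalIntegral.integral_const_mul, smul_eq_mul, mul_div_cancel₀ _ h₁,
    mul_div_cancel₀ _ h₂]
  field_simp

lemma intervalIntegral_intervalIntegral_eq_integral_indicator {F : ℝ → ℝ → ℝ} {a b c d : ℝ}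
    (hab : a ≤ b) (hcd : c ≤ d) (hF : IntegrableOn (Function.uncurry F) (Ioc a b ×ˢ Ioc c d)) :
    ∫ x in a..b, ∫ y in c..d, F x y =
      ∫ p : ℝ × ℝ, (Ioc a b ×ˢ Ioc c d).indicator (Function.uncurry F) p := by
  rw [integral_indicator (measurableSet_Ioc.prod measurableSet_Ioc), Measure.volume_eq_prod,
    setIntegral_prod _ (by rwa [← Measure.volume_eq_prod]), intervalIntegral.integral_of_le hab]
  refine setIntegral_congr_fun measurableSet_Ioc fun x _ => ?_
  rw [intervalIntegral.integral_of_le hcd]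
  rfl

lemma integrable_exp_neg_mul_pow_four {b : ℝ} (hb : 0 < b) :
    Integrable fun y : ℝ => exp (-b * y ^ 4) := by
  refine ((integrable_exp_neg_mul_sq hb).const_mul (exp b)).mono (by fun_prop)
    (ae_of_all _ fun y => ?_)
  rw [norm_of_nonneg (exp_pos _).le, norm_of_nonneg (by positivity), ← exp_add, exp_le_exp]
  nlinarith [sq_nonneg (y ^ 2 - 1)]

lemma integral_exp_neg_mul_pow_four {b : ℝ} (hb : 0 < b) :
    ∫ y : ℝ, exp (-b * y ^ 4) = Gamma (1 / 4) * b ^ (-(1 / 4 : ℝ)) / 2 := by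
  have h (y : ℝ) : y ^ 4 = |y| ^ (4 : ℝ) := by
    rw [rpow_ofNat, Even.pow_abs ⟨2, rfl⟩]
  simp_rw [h]
  rw [integral_comp_abs (f := fun y => exp (-b * y ^ (4 : ℝ))),
    integral_exp_neg_mul_rpow (by norm_num) hb, Gamma_add_one (by norm_num)]
  ring_nf

lemma integral_gaussian_eq_Gamma {a : ℝ} (ha : 0 < a) :
    ∫ x : ℝ, exp (-a * x ^ 2) = Gamma (1 / 2) * a ^ (-(1 / 2 : ℝ)) := by
  rw [integral_gaussian, Gamma_one_half_eq, rpow_neg ha.le, ← sqrt_eq_rpow, sqrt_div pi_pos.le,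
    div_eq_mul_inv]

lemma integral_exp_neg_quadratic_add_quartic {a b : ℝ} (ha : 0 < a) (hb : 0 < b) :
    ∫ p : ℝ × ℝ, exp (-(a * p.1 ^ 2 + b * p.2 ^ 4)) =
      Gamma (1 / 2) * Gamma (1 / 4) * a ^ (-(1 / 2 : ℝ)) * b ^ (-(1 / 4 : ℝ)) / 2 := by
  simp_rw [neg_add, exp_add, ← neg_mul]
  rw [Measure.volume_eq_prod, integral_prod_mul (fun x : ℝ => exp (-a * x ^ 2))
    (fun y : ℝ => exp (-b * y ^ 4)), integral_gaussian_eq_Gamma ha,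
    integral_exp_neg_mul_pow_four hb]
  ring

/-- The Laplace integrand after the substitution `u = t^{1/2} x`, `v = t^{1/4} y`. -/
noncomputable def rescaledLaplaceIntegrand (φ : ℝ → ℝ → ℝ) (δ t : ℝ) : ℝ × ℝ → ℝ :=
  (Ioc (-δ / √t) (δ / √t) ×ˢ Ioc (-δ / √√t) (δ / √√t)).indicator
    fun p => exp (-φ (√t * p.1) (√√t * p.2) / t)

section Rescaling

variable {φ ψ : ℝ → ℝ → ℝ} {a b δ t : ℝ}

lemma continuous_exp_neg_rescaled (hφ : Continuous (Function.uncurry φ)) (t : ℝ) :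
    Continuous fun p : ℝ × ℝ => exp (-φ (√t * p.1) (√√t * p.2) / t) :=
  continuous_exp.comp
    ((hφ.comp (by fun_prop : Continuous fun p : ℝ × ℝ => (√t * p.1, √√t * p.2))).neg.div_const
      t)

lemma rpow_mul_integral_exp_neg_div_eq_integral_rescaled (hφ : Continuous (Function.uncurry φ))
    (hδ : 0 ≤ δ) (ht : 0 < t) :
    t ^ (-(3 / 4 : ℝ)) * ∫ u in (-δ)..δ, ∫ v in (-δ)..δ, exp (-φ u v / t) =
      ∫ p, rescaledLaplaceIntegrand φ δ t p := by
  have h₁ : 0 < √t := sqrt_pos.2 ht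
  have h₂ : 0 < √√t := sqrt_pos.2 h₁
  rw [intervalIntegral_intervalIntegral_comp_mul_left _ h₁.ne' h₂.ne', ← mul_assoc,
    rpow_neg_three_quarters_mul_sqrt_mul_sqrt_sqrt ht, one_mul]
  refine intervalIntegral_intervalIntegral_eq_integral_indicator (by gcongr; linarith)
    (by gcongr; linarith) ?_
  exact ((continuous_exp_neg_rescaled hφ t).continuousOn.integrableOn_compact
    (isCompact_Icc.prod isCompact_Icc)).mono_set
    (prod_mono Ioc_subset_Icc_self Ioc_subset_Icc_self)

lemma norm_rescaledLaplaceIntegrand_le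
    (hlow : ∀ u v, |u| ≤ δ → |v| ≤ δ → a * u ^ 2 + b * v ^ 4 ≤ φ u v) (ht : 0 < t)
    (p : ℝ × ℝ) :
    ‖rescaledLaplaceIntegrand φ δ t p‖ ≤ exp (-a * p.1 ^ 2) * exp (-b * p.2 ^ 4) := by
  have h₁ : 0 < √t := sqrt_pos.2 ht
  have h₂ : 0 < √√t := sqrt_pos.2 h₁
  by_cases hp : p ∈ Ioc (-δ / √t) (δ / √t) ×ˢ Ioc (-δ / √√t) (δ / √√t)
  · rw [rescaledLaplaceIntegrand, indicator_of_mem hp, norm_of_nonneg (exp_pos _).le,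
      ← exp_add, exp_le_exp, div_le_iff₀ ht]
    obtain ⟨⟨hx₁, hx₂⟩, hy₁, hy₂⟩ := hp
    have hu : |√t * p.1| ≤ δ := by
      rw [abs_mul, abs_of_pos h₁, ← le_div_iff₀' h₁, abs_le, ← neg_div]
      exact ⟨hx₁.le, hx₂⟩
    have hv : |√√t * p.2| ≤ δ := by
      rw [abs_mul, abs_of_pos h₂, ← le_div_iff₀' h₂, abs_le, ← neg_div]
      exact ⟨hy₁.le, hy₂⟩
    have := hlow _ _ hu hv
    rw [mul_pow, sq_sqrt ht.le, mul_pow, sqrt_sqrt_pow_four ht.le] at this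
    linarith
  · rw [rescaledLaplaceIntegrand, indicator_of_notMem hp, norm_zero]
    positivity

lemma tendsto_rescaledLaplaceIntegrand (hδ : 0 < δ)
    (hlim : ∀ x y, Tendsto (fun t => φ (√t * x) (√√t * y) / t) (𝓝[>] 0) (𝓝 (ψ x y)))
    (p : ℝ × ℝ) :
    Tendsto (fun t => rescaledLaplaceIntegrand φ δ t p) (𝓝[>] 0) (𝓝 (exp (-ψ p.1 p.2))) := by
  have hx : Tendsto (fun t => √t * |p.1|) (𝓝[>] 0) (𝓝 0) :=
    ((continuous_sqrt.mul continuous_const).tendsto' 0 0 (by simp)).mono_left nhdsWithin_le_nhds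
  have hy : Tendsto (fun t => √√t * |p.2|) (𝓝[>] 0) (𝓝 0) :=
    ((continuous_sqrt.comp continuous_sqrt |>.mul continuous_const).tendsto' 0 0
      (by simp)).mono_left nhdsWithin_le_nhds
  refine ((continuous_exp.tendsto _).comp (hlim p.1 p.2).neg).congr' ?_
  filter_upwards [self_mem_nhdsWithin, hx.eventually (gt_mem_nhds hδ),
    hy.eventually (gt_mem_nhds hδ)] with t (ht : 0 < t) hxt hyt
  have h₁ : 0 < √t := sqrt_pos.2 ht
  have h₂ : 0 < √√t := sqrt_pos.2 h₁
  have hp : p ∈ Ioc (-δ / √t) (δ / √t) ×ˢ Ioc (-δ / √√t) (δ / √√t) := by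
    rw [← lt_div_iff₀' h₁, abs_lt, ← neg_div] at hxt
    rw [← lt_div_iff₀' h₂, abs_lt, ← neg_div] at hyt
    exact ⟨⟨hxt.1, hxt.2.le⟩, hyt.1, hyt.2.le⟩
  rw [rescaledLaplaceIntegrand, indicator_of_mem hp, neg_div]
  rfl

theorem tendsto_rpow_mul_integral_exp_neg_div (ha : 0 < a) (hb : 0 < b) (hδ : 0 < δ)
    (hφ : Continuous (Function.uncurry φ))
    (hlow : ∀ u v, |u| ≤ δ → |v| ≤ δ → a * u ^ 2 + b * v ^ 4 ≤ φ u v)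
    (hlim : ∀ x y, Tendsto (fun t => φ (√t * x) (√√t * y) / t) (𝓝[>] 0) (𝓝 (ψ x y))) :
    Tendsto
      (fun t : ℝ => t ^ (-(3 / 4 : ℝ)) * ∫ u in (-δ)..δ, ∫ v in (-δ)..δ, exp (-φ u v / t))
      (𝓝[>] 0) (𝓝 (∫ p : ℝ × ℝ, exp (-ψ p.1 p.2))) := by
  have hbound : Integrable fun p : ℝ × ℝ => exp (-a * p.1 ^ 2) * exp (-b * p.2 ^ 4) := by
    rw [Measure.volume_eq_prod]
    exact (integrable_exp_neg_mul_sq ha).mul_prod (integrable_exp_neg_mul_pow_four hb)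
  refine (tendsto_integral_filter_of_dominated_convergence (l := 𝓝[>] 0) _
    (Eventually.of_forall fun t =>
      (continuous_exp_neg_rescaled hφ t).aestronglyMeasurable.indicator
        (measurableSet_Ioc.prod measurableSet_Ioc))
    (eventually_mem_nhdsWithin.mono fun t ht =>
      ae_of_all _ (norm_rescaledLaplaceIntegrand_le hlow ht))
    hbound (ae_of_all _ (tendsto_rescaledLaplaceIntegrand hδ hlim))).congr' ?_
  filter_upwards [self_mem_nhdsWithin] with t ht
  exact (rpow_mul_integral_exp_neg_div_eq_integral_rescaled hφ hδ.le ht).symm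

end Rescaling

theorem tendsto_rpow_mul_integral_exp_neg_quadratic_add_quartic {a b : ℝ} (ha : 0 < a)
    (hb : 0 < b) {R : MvPolynomial (Fin 2) ℝ} (hR : ∀ d ∈ R.support, 5 ≤ 2 * d 0 + d 1) :
    ∃ δ₀ > 0, ∀ δ, 0 < δ → δ ≤ δ₀ →
      Tendsto (fun t : ℝ => t ^ (-(3 / 4 : ℝ)) *
          ∫ u in (-δ)..δ, ∫ v in (-δ)..δ, exp (-(a * u ^ 2 + b * v ^ 4 + eval ![u, v] R) / t))
        (𝓝[>] 0)
        (𝓝 (Gamma (1 / 2) * Gamma (1 / 4) * a ^ (-(1 / 2 : ℝ)) * b ^ (-(1 / 4 : ℝ)) / 2)) := by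
  set ε := min a b / 2
  obtain ⟨δ₀, hδ₀, hsmall⟩ := Metric.nhds_basis_closedBall.eventually_iff.1
    (isLittleO_iff.1 (isLittleO_eval_of_weightedDegree hR) (by positivity : 0 < ε))
  refine ⟨δ₀, hδ₀, fun δ hδ hδδ₀ => ?_⟩
  have hφ : Continuous
      (Function.uncurry fun u v : ℝ => a * u ^ 2 + b * v ^ 4 + eval ![u, v] R) := by
    have : Continuous fun p : ℝ × ℝ => (![p.1, p.2] : Fin 2 → ℝ) := by fun_prop
    exact (by fun_prop : Continuous fun p : ℝ × ℝ => a * p.1 ^ 2 + b * p.2 ^ 4).add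
      ((continuous_eval R).comp this)
  rw [← integral_exp_neg_quadratic_add_quartic ha hb]
  refine tendsto_rpow_mul_integral_exp_neg_div (ψ := fun x y => a * x ^ 2 + b * y ^ 4)
    (half_pos ha) (half_pos hb) hδ hφ (fun u v hu hv => ?_) (fun x y => ?_)
  · have hrem : |eval ![u, v] R| ≤ ε * (u ^ 2 + v ^ 4) := by
      have := @hsmall (u, v) (by
        simpa [Prod.norm_def] using ⟨hu.trans hδδ₀, hv.trans hδδ₀⟩)
      rwa [norm_eq_abs, norm_of_nonneg (by positivity)] at this
    have ha' : ε ≤ a / 2 := by simp only [ε]; gcongr; exact min_le_left a b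
    have hb' : ε ≤ b / 2 := by simp only [ε]; gcongr; exact min_le_right a b
    nlinarith [neg_abs_le (eval ![u, v] R), mul_le_mul_of_nonneg_right ha' (sq_nonneg u),
      mul_le_mul_of_nonneg_right hb' (by positivity : (0 : ℝ) ≤ v ^ 4)]
  · have hlim := (tendsto_const_nhds (x := a * x ^ 2 + b * y ^ 4)).add
      (tendsto_eval_sqrt_mul_div hR x y)
    rw [add_zero] at hlim
    refine hlim.congr' ?_
    filter_upwards [self_mem_nhdsWithin] with t (ht : 0 < t)
    rw [mul_pow, mul_pow, sq_sqrt ht.le, sqrt_sqrt_pow_four ht.le]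
    field_simp

/-- Laplace asymptotics with mixed exponents `m₁ = 1`, `m₂ = 2`: if
`g(u,v) = 8u² + (α/24)v⁴ + R(u,v)` with `α > 0` and `R` a polynomial all of whose
monomials have total degree `≥ 5`, then for all sufficiently small `δ > 0`,
`t^{-3/4} ∫_{[-δ,δ]²} e^{-g/t} → Γ(1/2)·Γ(1/4)·8^{-1/2}·(α/24)^{-1/4}/2` as `t → 0⁺`. -/
theorem laplace_asymptotic_mixed_exponents (α : ℝ) (hα : 0 < α)
    (R : MvPolynomial (Fin 2) ℝ)
    (hR : ∀ d ∈ R.support, 5 ≤ d.sum fun _ e => e)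
    (g : ℝ → ℝ → ℝ)
    (hg : ∀ u v : ℝ, g u v = 8 * u ^ 2 + α / 24 * v ^ 4 + MvPolynomial.eval ![u, v] R) :
    ∃ δ₀ > 0, ∀ δ : ℝ, 0 < δ → δ ≤ δ₀ →
      Tendsto
        (fun t : ℝ =>
          t ^ (-(3 / 4 : ℝ)) * ∫ u in (-δ)..δ, ∫ v in (-δ)..δ, Real.exp (-g u v / t))
        (nhdsWithin 0 (Set.Ioi 0))
        (nhds (Real.Gamma (1 / 2) * Real.Gamma (1 / 4) *
          (8 : ℝ) ^ (-(1 / 2 : ℝ)) * (α / 24) ^ (-(1 / 4 : ℝ)) / 2)) := by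
  have hweighted : ∀ d ∈ R.support, 5 ≤ 2 * d 0 + d 1 := fun d hd => by
    have := hR d hd
    rw [Finsupp.sum_fintype _ _ fun _ => rfl, Fin.sum_univ_two] at this
    omega
  obtain rfl : g = fun u v => 8 * u ^ 2 + α / 24 * v ^ 4 + eval ![u, v] R := funext₂ hg
  exact tendsto_rpow_mul_integral_exp_neg_quadratic_add_quartic (by norm_num) (by positivity)
    hweighted
end
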